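/- Let psi(pi_1) = (sigma_1, x_1) and psi(pi_2) = (sigma_2, x_2) under the bijection from NC_B(n) to pairs (sigma, x). If pi_1 <= pi_2 in NC_B(n) and x_2 is a block of sigma_2, then sigma_1 <= sigma_2 in NC(n) and x_1 is either: a block of sigma_1 contained in x_2; an edge (i,j) of sigma_1 with i,j in x_2; the minimal-length edge (i,j) of sigma_1 with i < min(x_2) <= max(x_2) < j if such an edge exists; or the empty set if no such edge exists. -/

import Mathlib

/-!
Since `π₂` is of type B, its zero block `Z` is the only block meeting some `±m`, and `x₂` is
the nonempty set of positive elements of `Z`. For `m ∈ x₂` the chord `{m, -m}` of `Z` crosses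
every other chord that separates `m` from `-m` in the circular order. Hence a block of `π₂`
holding `i < m < j` (all positive), or holding `a` and `-b` with `a < b` and `m ∉ (a, b)`, must
be `Z`. Consequently no edge `i ∼ j` of `σ₁` coming from a positive pair of `π₁` straddles
`x₂` (it would put `i` into `x₂`), so every straddling edge comes from a pair `i ∼ -j` and is
at least as long as the minimal such pair; and that minimal pair either lies in `x₂` or
straddles it.
-/

open Finset

/-- The ground set `{±1, …, ±n} ⊆ ℤ`. -/
noncomputable abbrev gsB (n : ℕ) : Finset ℤ := (Finset.Icc (-(n : ℤ)) (n : ℤ)).erase 0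

/-- The negative `-B` of a set of integers. -/
def negSet (B : Finset ℤ) : Finset ℤ := B.image (fun x => -x)

/-- `a` and `b` lie in a common block of the partition `P`. -/
def SameBlock {α : Type*} [DecidableEq α] {s : Finset α} (P : Finpartition s) (a b : α) : Prop :=
  ∃ B ∈ P.parts, a ∈ B ∧ b ∈ B

/-- Refinement order on partitions. -/
def Refines {α : Type*} [DecidableEq α] {s : Finset α} (P Q : Finpartition s) : Prop :=
  ∀ B ∈ P.parts, ∃ C ∈ Q.parts, B ⊆ C

/-- A partition of `{±1,…,±n}` is of type `Bₙ`: blocks come in pairs `B, -B` and there is at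
most one block with `B = -B` (the zero block). -/
def IsBPartition {n : ℕ} (P : Finpartition (gsB n)) : Prop :=
  (∀ B ∈ P.parts, negSet B ∈ P.parts) ∧
  (∀ B ∈ P.parts, ∀ C ∈ P.parts, negSet B = B → negSet C = C → B = C)

/-- The position of `x ∈ {±1,…,±n}` in the circular order `1, 2, …, n, -1, -2, …, -n`. -/
def posB (n : ℕ) (x : ℤ) : ℕ := if 0 < x then x.toNat - 1 else n + (-x).toNat - 1

/-- A type `Bₙ` partition is noncrossing: no two blocks cross in the circular representation,
i.e. there are no positions `p a < p b < p c < p d` (in the circular order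
`1,…,n,-1,…,-n`) with `a, c` in one block and `b, d` in a different one. -/
def IsNoncrossingB {n : ℕ} (P : Finpartition (gsB n)) : Prop :=
  ∀ a b c d : ℤ, posB n a < posB n b → posB n b < posB n c → posB n c < posB n d →
    SameBlock P a c → SameBlock P b d → SameBlock P a b

/-- The partition has a zero block. -/
def HasZeroBlock {n : ℕ} (P : Finpartition (gsB n)) : Prop :=
  ∃ B ∈ P.parts, negSet B = B

/-- The number of unordered pairs `(B, -B)` of nonzero blocks of `P`. -/
def nzB {n : ℕ} (P : Finpartition (gsB n)) : ℕ :=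
  (P.parts.filter fun B => negSet B ≠ B).card / 2

/-- The number of unordered pairs `(B, -B)` of nonzero blocks of `P` of size `i`. -/
def btype {n : ℕ} (P : Finpartition (gsB n)) (i : ℕ) : ℕ :=
  (P.parts.filter fun B => negSet B ≠ B ∧ B.card = i).card / 2

/-- Every block of `P` has size divisible by `k`. -/
def IsKDivisible {α : Type*} [DecidableEq α] {s : Finset α} (k : ℕ) (P : Finpartition s) : Prop :=
  ∀ B ∈ P.parts, k ∣ B.card

open scoped Classical in
/-- The block `x` of ψ(π) when `π` has a zero block: the set of positive `i` with `i ∼ -i`. -/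
noncomputable def xBlock (n : ℕ) (P : Finpartition (gsB n)) : Finset ℕ :=
  (Finset.Icc 1 n).filter (fun i => SameBlock P (i : ℤ) (-(i : ℤ)))

/-- `i` and `j` (positive) lie in a common block of the quotient partition `σ` of `π`. -/
def SameQ {n : ℕ} (P : Finpartition (gsB n)) (i j : ℕ) : Prop :=
  SameBlock P (i : ℤ) (j : ℤ) ∨ SameBlock P (i : ℤ) (-(j : ℤ))

/-- `(i, j)` is an edge of the quotient partition `σ` of `π`. -/
def IsEdgeQ {n : ℕ} (P : Finpartition (gsB n)) (i j : ℕ) : Prop :=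
  1 ≤ i ∧ j ≤ n ∧ i < j ∧ SameQ P i j ∧ ∀ m, i < m → m < j → ¬ SameQ P i m

/-- `(a, b)` is the minimal-length pair with `a ∼ -b` in `π`; by Lemma 3.2 this pair is the
edge `x` of `ψ(π) = (σ, x)` when `π` has no zero block but some block meets both signs. -/
def IsXEdge {n : ℕ} (P : Finpartition (gsB n)) (a b : ℕ) : Prop :=
  1 ≤ a ∧ b ≤ n ∧ a < b ∧ SameBlock P (a : ℤ) (-(b : ℤ)) ∧
    ∀ a' b' : ℕ, 1 ≤ a' → b' ≤ n → a' < b' → SameBlock P (a' : ℤ) (-(b' : ℤ)) →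
      b - a ≤ b' - a'

/-- The parts of the quotient noncrossing partition `σ` of `[n]` obtained from `π`. -/
def quotParts {n : ℕ} (P : Finpartition (gsB n)) : Finset (Finset ℕ) :=
  P.parts.image (fun B => B.image Int.natAbs)

theorem mem_negSet {B : Finset ℤ} {x : ℤ} : x ∈ negSet B ↔ -x ∈ B := by
  simp [negSet, neg_eq_iff_eq_neg]

theorem neg_mem_of_negSet_eq {B : Finset ℤ} (hB : negSet B = B) {x : ℤ} (hx : x ∈ B) : -x ∈ B := by
  rw [← hB, mem_negSet, neg_neg]
  exact hx

theorem posB_natCast (n : ℕ) {m : ℕ} (hm : 1 ≤ m) : posB n (m : ℤ) = m - 1 := by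
  have : (0 : ℤ) < m := by exact_mod_cast hm
  rw [posB, if_pos this, Int.toNat_natCast]

theorem posB_neg_natCast (n m : ℕ) : posB n (-(m : ℤ)) = n + m - 1 := by
  simp [posB]

section SameBlock

variable {α : Type*} [DecidableEq α] {s : Finset α} {P Q : Finpartition s} {a b : α}

theorem SameBlock.symm (h : SameBlock P a b) : SameBlock P b a := by
  obtain ⟨B, hB, ha, hb⟩ := h
  exact ⟨B, hB, hb, ha⟩

theorem SameBlock.mem_of_mem (h : SameBlock P a b) {B : Finset α} (hB : B ∈ P.parts)
    (hb : b ∈ B) : a ∈ B := by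
  obtain ⟨C, hC, haC, hbC⟩ := h
  rwa [P.eq_of_mem_parts hB hC hb hbC]

theorem Refines.sameBlock (hPQ : Refines P Q) (h : SameBlock P a b) : SameBlock Q a b := by
  obtain ⟨B, hB, ha, hb⟩ := h
  obtain ⟨C, hC, hBC⟩ := hPQ B hB
  exact ⟨C, hC, hBC ha, hBC hb⟩

end SameBlock

section TypeB

variable {n : ℕ} {P Q : Finpartition (gsB n)}

theorem Refines.exists_quotParts_superset (hPQ : Refines P Q) :
    ∀ A ∈ quotParts P, ∃ C ∈ quotParts Q, A ⊆ C := by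
  simp only [quotParts, mem_image]
  rintro _ ⟨B, hB, rfl⟩
  obtain ⟨C, hC, hBC⟩ := hPQ B hB
  exact ⟨_, ⟨C, hC, rfl⟩, image_subset_image hBC⟩

theorem Refines.xBlock_subset (hPQ : Refines P Q) : xBlock n P ⊆ xBlock n Q := by
  intro m hm
  simp only [xBlock, mem_filter] at hm ⊢
  exact ⟨hm.1, hPQ.sameBlock hm.2⟩

theorem exists_isXEdge
    (h : ∃ a b : ℕ, 1 ≤ a ∧ b ≤ n ∧ a < b ∧ SameBlock P (a : ℤ) (-(b : ℤ))) :
    ∃ a b, IsXEdge P a b := by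
  classical
  have hd : ∃ d a b : ℕ, (1 ≤ a ∧ b ≤ n ∧ a < b ∧ SameBlock P (a : ℤ) (-(b : ℤ))) ∧
      b - a = d := by
    obtain ⟨a, b, hab⟩ := h
    exact ⟨_, a, b, hab, rfl⟩
  obtain ⟨a, b, ⟨ha, hb, hab, hsb⟩, hd_eq⟩ := Nat.find_spec hd
  exact ⟨a, b, ha, hb, hab, hsb, fun a' b' ha' hb' hab' hsb' =>
    hd_eq ▸ Nat.find_min' hd ⟨a', b', ⟨ha', hb', hab', hsb'⟩, rfl⟩⟩

variable {Z : Finset ℤ}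

theorem mem_xBlock_iff_of_zeroBlock (hB : IsBPartition P) (hZ : Z ∈ P.parts)
    (hZneg : negSet Z = Z) (m : ℕ) : m ∈ xBlock n P ↔ (1 ≤ m ∧ m ≤ n) ∧ (m : ℤ) ∈ Z := by
  simp only [xBlock, mem_filter, mem_Icc]
  refine and_congr_right fun _ => ⟨fun ⟨B, hB', hmB, hmB'⟩ => ?_, fun hm =>
    ⟨Z, hZ, hm, neg_mem_of_negSet_eq hZneg hm⟩⟩
  -- `B` meets `-B` in `-m`, so `B` is self-negative, hence the unique zero block
  have hBneg : negSet B = B :=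
    P.eq_of_mem_parts (hB.1 B hB') hB' (mem_negSet.mpr (by simpa using hmB)) hmB'
  rwa [← hB.2 B hB' Z hZ hBneg hZneg]

theorem xBlock_nonempty_of_zeroBlock (hB : IsBPartition P) (hZ : Z ∈ P.parts)
    (hZneg : negSet Z = Z) : (xBlock n P).Nonempty := by
  obtain ⟨z, hz⟩ := P.nonempty_of_mem_parts hZ
  have hz' : z ≠ 0 ∧ -(n : ℤ) ≤ z ∧ z ≤ n := by simpa using P.le hZ hz
  refine ⟨z.natAbs, (mem_xBlock_iff_of_zeroBlock hB hZ hZneg _).mpr ⟨by omega, ?_⟩⟩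
  rcases Int.natAbs_eq z with h | h
  · rwa [← h]
  · rw [← neg_eq_iff_eq_neg.mpr h]
    exact neg_mem_of_negSet_eq hZneg hz

theorem IsNoncrossingB.mem_zeroBlock_of_lt_of_lt (hnc : IsNoncrossingB P) (hZ : Z ∈ P.parts)
    (hZneg : negSet Z = Z) {i j m : ℕ} (hi : 1 ≤ i) (hj : j ≤ n)
    (hij : SameBlock P (i : ℤ) (j : ℤ)) (hm : (m : ℤ) ∈ Z) (him : i < m) (hmj : m < j) :
    (i : ℤ) ∈ Z := by
  have hcross := hnc (i : ℤ) m j (-(m : ℤ))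
    (by rw [posB_natCast n hi, posB_natCast n (by omega)]; omega)
    (by rw [posB_natCast n (by omega), posB_natCast n (by omega)]; omega)
    (by rw [posB_natCast n (by omega), posB_neg_natCast]; omega)
    hij ⟨Z, hZ, hm, neg_mem_of_negSet_eq hZneg hm⟩
  exact hcross.mem_of_mem hZ hm

theorem IsNoncrossingB.mem_zeroBlock_of_sameBlock_neg (hnc : IsNoncrossingB P)
    (hZ : Z ∈ P.parts) (hZneg : negSet Z = Z) {a b m : ℕ} (ha : 1 ≤ a) (hb : b ≤ n)
    (hab : a < b) (hsb : SameBlock P (a : ℤ) (-(b : ℤ))) (hm : 1 ≤ m) (hmn : m ≤ n)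
    (hmZ : (m : ℤ) ∈ Z) (hout : ¬ (a < m ∧ m < b)) : (a : ℤ) ∈ Z := by
  have hmZ' := neg_mem_of_negSet_eq hZneg hmZ
  rcases lt_trichotomy m a with hma | rfl | ham
  · have hcross := hnc m a (-(m : ℤ)) (-(b : ℤ))
      (by rw [posB_natCast n hm, posB_natCast n ha]; omega)
      (by rw [posB_natCast n ha, posB_neg_natCast]; omega)
      (by rw [posB_neg_natCast, posB_neg_natCast]; omega)
      ⟨Z, hZ, hmZ, hmZ'⟩ hsb
    exact hcross.symm.mem_of_mem hZ hmZ
  · exact hmZ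
  · rcases (show m = b ∨ b < m by omega) with rfl | hbm
    · exact hsb.mem_of_mem hZ hmZ'
    · have hcross := hnc a m (-(b : ℤ)) (-(m : ℤ))
        (by rw [posB_natCast n ha, posB_natCast n hm]; omega)
        (by rw [posB_natCast n hm, posB_neg_natCast]; omega)
        (by rw [posB_neg_natCast, posB_neg_natCast]; omega)
        hsb ⟨Z, hZ, hmZ, hmZ'⟩
      exact hcross.mem_of_mem hZ hmZ

theorem not_forall_lt_xBlock_of_sameBlock (hB : IsBPartition Q) (hnc : IsNoncrossingB Q)
    (hz : HasZeroBlock Q) {i j : ℕ} (hi : 1 ≤ i) (hj : j ≤ n)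
    (hij : SameBlock Q (i : ℤ) (j : ℤ)) :
    ¬ ∀ m ∈ xBlock n Q, i < m ∧ m < j := by
  intro hs
  obtain ⟨Z, hZ, hZneg⟩ := hz
  have hx := mem_xBlock_iff_of_zeroBlock hB hZ hZneg
  obtain ⟨m, hm⟩ := xBlock_nonempty_of_zeroBlock hB hZ hZneg
  obtain ⟨him, hmj⟩ := hs m hm
  have hiZ := hnc.mem_zeroBlock_of_lt_of_lt hZ hZneg hi hj hij (hx m |>.mp hm).2 him hmj
  exact lt_irrefl i (hs i ((hx i).mpr ⟨⟨hi, by omega⟩, hiZ⟩)).1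

theorem mem_xBlock_or_forall_lt_xBlock_of_sameBlock_neg (hB : IsBPartition Q)
    (hnc : IsNoncrossingB Q) (hz : HasZeroBlock Q) {a b : ℕ} (ha : 1 ≤ a) (hb : b ≤ n)
    (hab : a < b) (hsb : SameBlock Q (a : ℤ) (-(b : ℤ))) :
    (a ∈ xBlock n Q ∧ b ∈ xBlock n Q) ∨ ∀ m ∈ xBlock n Q, a < m ∧ m < b := by
  obtain ⟨Z, hZ, hZneg⟩ := hz
  have hx := mem_xBlock_iff_of_zeroBlock hB hZ hZneg
  by_cases haZ : (a : ℤ) ∈ Z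
  · have hbZ : (b : ℤ) ∈ Z := by
      simpa using neg_mem_of_negSet_eq hZneg (hsb.symm.mem_of_mem hZ haZ)
    exact .inl ⟨(hx a).mpr ⟨⟨ha, by omega⟩, haZ⟩, (hx b).mpr ⟨⟨by omega, hb⟩, hbZ⟩⟩
  · refine .inr fun m hm => by_contra fun hout => haZ ?_
    exact hnc.mem_zeroBlock_of_sameBlock_neg hZ hZneg ha hb hab hsb (hx m |>.mp hm).1.1
      (hx m |>.mp hm).1.2 (hx m |>.mp hm).2 hout

theorem Refines.sameBlock_neg_of_isEdgeQ (hPQ : Refines P Q) (hB : IsBPartition Q)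
    (hnc : IsNoncrossingB Q) (hz : HasZeroBlock Q) {i j : ℕ} (he : IsEdgeQ P i j)
    (hs : ∀ m ∈ xBlock n Q, i < m ∧ m < j) : SameBlock P (i : ℤ) (-(j : ℤ)) :=
  he.2.2.2.1.resolve_left fun h =>
    not_forall_lt_xBlock_of_sameBlock hB hnc hz he.1 he.2.1 (hPQ.sameBlock h) hs

end TypeB

theorem stmt17_general (n : ℕ) (π₁ π₂ : Finpartition (gsB n))
    (h2 : IsBPartition π₂ ∧ IsNoncrossingB π₂)
    (hle : Refines π₁ π₂) (hz2 : HasZeroBlock π₂) :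
    (∀ A ∈ quotParts π₁, ∃ C ∈ quotParts π₂, A ⊆ C) ∧
    ((HasZeroBlock π₁ ∧ xBlock n π₁ ⊆ xBlock n π₂) ∨
     (¬ HasZeroBlock π₁ ∧ ∃ a b : ℕ, IsXEdge π₁ a b ∧
        ((a ∈ xBlock n π₂ ∧ b ∈ xBlock n π₂) ∨
         ((∀ m ∈ xBlock n π₂, a < m ∧ m < b) ∧
          ∀ i j : ℕ, IsEdgeQ π₁ i j → (∀ m ∈ xBlock n π₂, i < m ∧ m < j) →
            b - a ≤ j - i))) ∨
     (¬ HasZeroBlock π₁ ∧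
        (¬ ∃ a b : ℕ, 1 ≤ a ∧ b ≤ n ∧ a < b ∧ SameBlock π₁ (a : ℤ) (-(b : ℤ))) ∧
        ¬ ∃ i j : ℕ, IsEdgeQ π₁ i j ∧ ∀ m ∈ xBlock n π₂, i < m ∧ m < j)) := by
  obtain ⟨hB2, hnc2⟩ := h2
  refine ⟨hle.exists_quotParts_superset, ?_⟩
  by_cases hz1 : HasZeroBlock π₁
  · exact .inl ⟨hz1, hle.xBlock_subset⟩
  by_cases hmix : ∃ a b : ℕ, 1 ≤ a ∧ b ≤ n ∧ a < b ∧ SameBlock π₁ (a : ℤ) (-(b : ℤ))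
  · obtain ⟨a, b, hxe⟩ := exists_isXEdge hmix
    have ⟨ha, hb, hab, hsb, hmin⟩ := hxe
    refine .inr <| .inl ⟨hz1, a, b, hxe, ?_⟩
    refine (mem_xBlock_or_forall_lt_xBlock_of_sameBlock_neg hB2 hnc2 hz2 ha hb hab
      (hle.sameBlock hsb)).imp_right fun hs => ⟨hs, fun i j he hs' => ?_⟩
    exact hmin i j he.1 he.2.1 he.2.2.1 (hle.sameBlock_neg_of_isEdgeQ hB2 hnc2 hz2 he hs')
  · refine .inr <| .inr ⟨hz1, hmix, fun ⟨i, j, he, hs⟩ => ?_⟩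
    refine hmix ⟨i, j, he.1, he.2.1, he.2.2.1, ?_⟩
    exact hle.sameBlock_neg_of_isEdgeQ hB2 hnc2 hz2 he hs

/-- **Proposition 3.4 (block case).** Suppose `ψ(π₁) = (σ₁, x₁)`, `ψ(π₂) = (σ₂, x₂)`,
`π₁ ≤ π₂` in `NC_B(n)` and `x₂` is a block of `σ₂` (i.e. `π₂` has a zero block).  Then
`σ₁ ≤ σ₂` in `NC(n)`, and `x₁` is either a block of `σ₁` contained in `x₂`, an edge `(i,j)`
of `σ₁` with `i, j ∈ x₂`, the minimal-length edge `(i,j)` of `σ₁` with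
`i < min x₂ ≤ max x₂ < j` if such an edge exists, or the empty set if no such edge exists. -/
theorem stmt17 (n : ℕ) (π₁ π₂ : Finpartition (gsB n))
    (h1 : IsBPartition π₁ ∧ IsNoncrossingB π₁) (h2 : IsBPartition π₂ ∧ IsNoncrossingB π₂)
    (hle : Refines π₁ π₂) (hz2 : HasZeroBlock π₂) :
    (∀ A ∈ quotParts π₁, ∃ C ∈ quotParts π₂, A ⊆ C) ∧
    ((HasZeroBlock π₁ ∧ xBlock n π₁ ⊆ xBlock n π₂) ∨
     (¬ HasZeroBlock π₁ ∧ ∃ a b : ℕ, IsXEdge π₁ a b ∧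
        ((a ∈ xBlock n π₂ ∧ b ∈ xBlock n π₂) ∨
         ((∀ m ∈ xBlock n π₂, a < m ∧ m < b) ∧
          ∀ i j : ℕ, IsEdgeQ π₁ i j → (∀ m ∈ xBlock n π₂, i < m ∧ m < j) →
            b - a ≤ j - i))) ∨
     (¬ HasZeroBlock π₁ ∧
        (¬ ∃ a b : ℕ, 1 ≤ a ∧ b ≤ n ∧ a < b ∧ SameBlock π₁ (a : ℤ) (-(b : ℤ))) ∧
        ¬ ∃ i j : ℕ, IsEdgeQ π₁ i j ∧ ∀ m ∈ xBlock n π₂, i < m ∧ m < j)) :=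
  stmt17_general n π₁ π₂ h2 hle hz2
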